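/- For the balanced triangular Polya urn with colors x, y, w, replacement matrix adding θ x-balls after drawing x, adding δ y-balls and λ = θ−δ w-balls after drawing y, and adding θ w-balls after drawing w, with initial composition (a_0, b_0, c_0) and t_0 = a_0+b_0+c_0, the l-th factorial moment of the number X_n of x-balls at time n satisfies E[(X_n)_l] = θ^l · ((a_0/θ)^{(l)} / (t_0/θ)^{(l)}) · n^l + O(n^{l−1}), where x^{(l)} = Γ(x+l)/Γ(x) is the rising factorial. -/

import Mathlib

/-!
Write `X_n` for the number of `x`-balls and `T_n = t₀ + nθ` for the total after `n` draws.
Given the past, the next draw is `x` with probability `X_n / T_n`, and the identity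
`x ∏_{i<l} (x + θ + iθ) = (x + lθ) ∏_{i<l} (x + iθ)` turns this into the exact recursion
`R_{n+1} = (1 + lθ / T_n) R_n` for the rising moments `R_n = E[∏_{i<l} (X_n + iθ)]`. It telescopes
to `R_n = θ^l (a₀/θ)^{(l)} (t₀/θ + n)^{(l)} / (t₀/θ)^{(l)}`, which is the claimed main term plus
`O(n^{l-1})`. The falling factorial `(X_n)_l` differs from `∏_{i<l} (X_n + iθ)` by a polynomial
of degree `l - 1` in `X_n ≤ a₀ + nθ`, so the two moments differ by `O(n^{l-1})` as well.
-/

open MeasureTheory ProbabilityTheory Filter Set Asymptotics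

/-- Balanced triangular Pólya urn with colors `x, y, w`, driven by a sequence `U` of
uniform random numbers on `[0,1)`: drawing `x` adds `θ` `x`-balls, drawing `y` adds
`δ` `y`-balls and `λ = θ - δ` `w`-balls, drawing `w` adds `θ` `w`-balls. -/
noncomputable def urn3 (θ δ a0 b0 c0 : ℝ) (U : ℕ → ℝ) : ℕ → ℝ × ℝ × ℝ
  | 0 => (a0, b0, c0)
  | n + 1 =>
      let s := urn3 θ δ a0 b0 c0 U n
      let tt := s.1 + s.2.1 + s.2.2
      if U n < s.1 / tt then (s.1 + θ, s.2.1, s.2.2)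
      else if U n < (s.1 + s.2.1) / tt then (s.1, s.2.1 + δ, s.2.2 + (θ - δ))
      else (s.1, s.2.1, s.2.2 + θ)

/-- Generalized rising factorial `x^{(s)} = Γ(x+s)/Γ(x)`. -/
noncomputable def risingFact (x s : ℝ) : ℝ := Real.Gamma (x + s) / Real.Gamma x

section Path

variable {θ δ a0 b0 c0 : ℝ} (V : ℕ → ℝ)

lemma urn3_total (n : ℕ) :
    (urn3 θ δ a0 b0 c0 V n).1 + (urn3 θ δ a0 b0 c0 V n).2.1 + (urn3 θ δ a0 b0 c0 V n).2.2
      = a0 + b0 + c0 + n * θ := by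
  induction n with
  | zero => simp [urn3]
  | succ n ih =>
    rw [urn3]
    push_cast
    split_ifs <;> simp only <;> linarith

lemma urn3_fst_succ (n : ℕ) :
    (urn3 θ δ a0 b0 c0 V (n + 1)).1 =
      if V n < (urn3 θ δ a0 b0 c0 V n).1 / (a0 + b0 + c0 + n * θ) then
        (urn3 θ δ a0 b0 c0 V n).1 + θ
      else (urn3 θ δ a0 b0 c0 V n).1 := by
  rw [urn3, ← urn3_total (δ := δ) V n]
  split_ifs <;> rfl

lemma urn3_fst_ge (hθ : 0 ≤ θ) (n : ℕ) : a0 ≤ (urn3 θ δ a0 b0 c0 V n).1 := by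
  induction n with
  | zero => simp [urn3]
  | succ n ih =>
    rw [urn3_fst_succ]
    split_ifs <;> linarith

lemma urn3_fst_le (hθ : 0 ≤ θ) (n : ℕ) : (urn3 θ δ a0 b0 c0 V n).1 ≤ a0 + n * θ := by
  induction n with
  | zero => simp [urn3]
  | succ n ih =>
    rw [urn3_fst_succ]
    push_cast
    split_ifs <;> linarith

/-- Each draw of `y` or `w` adds `θ` balls to `y` and `w` together. -/
lemma urn3_snd_add_snd_ge (hθ : 0 ≤ θ) (n : ℕ) :
    b0 + c0 ≤ (urn3 θ δ a0 b0 c0 V n).2.1 + (urn3 θ δ a0 b0 c0 V n).2.2 := by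
  induction n with
  | zero => simp [urn3]
  | succ n ih =>
    rw [urn3]
    split_ifs <;> simp only <;> linarith

lemma urn3_fst_div_total_mem_Icc (hθ : 0 ≤ θ) (ha0 : 0 ≤ a0) (hbc : 0 ≤ b0 + c0) (n : ℕ) :
    (urn3 θ δ a0 b0 c0 V n).1 / (a0 + b0 + c0 + n * θ) ∈ Icc 0 1 := by
  have hX := ha0.trans (urn3_fst_ge (δ := δ) (b0 := b0) (c0 := c0) V hθ n)
  have hYW := hbc.trans (urn3_snd_add_snd_ge (δ := δ) (a0 := a0) V hθ n)
  rw [← urn3_total V n]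
  exact ⟨div_nonneg hX (by linarith), div_le_one_of_le₀ (by linarith) (by linarith)⟩

end Path

lemma urn3_congr {θ δ a0 b0 c0 : ℝ} {V V' : ℕ → ℝ} {n : ℕ} (h : ∀ i < n, V i = V' i) :
    urn3 θ δ a0 b0 c0 V n = urn3 θ δ a0 b0 c0 V' n := by
  induction n with
  | zero => rfl
  | succ n ih => rw [urn3, urn3, ih fun i hi => h i (by omega), h n n.lt_succ_self]

lemma measurable_urn3 (θ δ a0 b0 c0 : ℝ) (n : ℕ) :
    Measurable fun V : ℕ → ℝ => urn3 θ δ a0 b0 c0 V n := by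
  induction n with
  | zero => exact measurable_const
  | succ n ih =>
    simp only [urn3]
    have h1 := ih.fst
    have h2 := ih.snd.fst
    have h3 := ih.snd.snd
    refine Measurable.ite ?_ (by fun_prop) (Measurable.ite ?_ (by fun_prop) (by fun_prop)) <;>
      exact measurableSet_lt (measurable_pi_apply n) (by fun_prop)

lemma ProbabilityTheory.IndepFun.integral_comp_prodMk {Ω α β : Type*} [MeasurableSpace Ω]
    [MeasurableSpace α] [MeasurableSpace β] {P : Measure Ω} [IsFiniteMeasure P]
    {X : Ω → α} {Y : Ω → β} (hXY : IndepFun X Y P) (hX : AEMeasurable X P)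
    (hY : AEMeasurable Y P) {G : α × β → ℝ} (hG : Measurable G)
    (hGi : Integrable (fun ω => G (X ω, Y ω)) P) :
    ∫ ω, G (X ω, Y ω) ∂P = ∫ ω, ∫ y, G (X ω, y) ∂(P.map Y) ∂P := by
  have hXY' := hX.prodMk hY
  have hmap := hXY.map_prod_eq_prod_map_map hX hY
  rw [← integral_map hXY' hG.aestronglyMeasurable, hmap,
    integral_prod G (by rwa [← hmap, integrable_map_measure hG.aestronglyMeasurable hXY']),
    integral_map hX hG.stronglyMeasurable.integral_prod_right'.aestronglyMeasurable]

lemma integral_Ico_ite_lt {p : ℝ} (hp0 : 0 ≤ p) (hp1 : p ≤ 1) (A B : ℝ) :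
    ∫ u in Ico (0 : ℝ) 1, (if u < p then A else B) = p * A + (1 - p) * B := by
  have hA : EqOn (fun u => if u < p then A else B) (fun _ => A) (Ico 0 p) :=
    fun u hu => if_pos hu.2
  have hB : EqOn (fun u => if u < p then A else B) (fun _ => B) (Ico p 1) :=
    fun u hu => if_neg hu.1.not_gt
  have hdisj : Disjoint (Ico 0 p) (Ico p 1) :=
    Set.disjoint_left.2 fun u hu hu' => hu'.1.not_gt hu.2
  rw [← Ico_union_Ico_eq_Ico hp0 hp1, setIntegral_union hdisj measurableSet_Ico
      ((integrableOn_const measure_Ico_lt_top.ne).congr_fun hA.symm measurableSet_Ico)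
      ((integrableOn_const measure_Ico_lt_top.ne).congr_fun hB.symm measurableSet_Ico),
    setIntegral_congr_fun measurableSet_Ico hA, setIntegral_congr_fun measurableSet_Ico hB]
  simp [measureReal_def, Real.volume_Ico, hp0, hp1]

open Finset in
lemma mul_prod_range_add_succ_mul (x θ : ℝ) (l : ℕ) :
    x * ∏ i ∈ range l, (x + θ + i * θ) = (x + l * θ) * ∏ i ∈ range l, (x + i * θ) := by
  rw [prod_congr rfl fun i _ => show x + θ + i * θ = x + (i + 1 : ℕ) * θ by push_cast; ring]
  linear_combination (prod_range_succ' (fun i : ℕ => x + i * θ) l).symm.trans (prod_range_succ _ l)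

open Finset in
lemma prod_range_one_add_div {z : ℝ} (hz : 0 < z) (l n : ℕ) :
    ∏ k ∈ range n, (1 + l / (z + k)) = (∏ i ∈ range l, (n + (z + i))) / ∏ i ∈ range l, (z + i) := by
  have key : (∏ k ∈ range n, (l + (z + k))) * ∏ i ∈ range l, (z + i) =
      (∏ k ∈ range n, (z + k)) * ∏ i ∈ range l, (n + (z + i)) := by
    have h1 := prod_range_add (fun j : ℕ => z + j) n l
    have h2 := prod_range_add (fun j : ℕ => z + j) l n
    rw [add_comm l n] at h2
    push_cast at h1 h2
    simp only [add_left_comm z] at h1 h2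
    linear_combination h1 - h2
  have hpos : ∀ m : ℕ, 0 < ∏ i ∈ range m, (z + i) := fun m => prod_pos fun i _ => by positivity
  rw [prod_congr rfl fun (k : ℕ) _ => show 1 + (l : ℝ) / (z + k) = (l + (z + k)) / (z + k) by
      field_simp; ring, prod_div_distrib, div_eq_div_iff (hpos n).ne' (hpos l).ne']
  linear_combination key

lemma risingFact_natCast_eq_prod {x : ℝ} (hx : 0 < x) (l : ℕ) :
    risingFact x l = ∏ i ∈ Finset.range l, (x + i) := by
  induction l with
  | zero => simp [risingFact, (Real.Gamma_pos_of_pos hx).ne']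
  | succ l ih =>
    rw [Finset.prod_range_succ, ← ih, risingFact, risingFact, Nat.cast_succ, ← add_assoc,
      Real.Gamma_add_one (by positivity)]
    ring

section Moments

variable {Ω : Type*} [MeasurableSpace Ω] {P : Measure Ω} {U : ℕ → Ω → ℝ} {θ δ a0 b0 c0 : ℝ}

noncomputable def urn3X (θ δ a0 b0 c0 : ℝ) (U : ℕ → Ω → ℝ) (n : ℕ) (ω : Ω) : ℝ :=
  (urn3 θ δ a0 b0 c0 (fun j => U j ω) n).1

lemma aemeasurable_urn3X (hU : ∀ i, AEMeasurable (U i) P) (n : ℕ) :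
    AEMeasurable (urn3X θ δ a0 b0 c0 U n) P :=
  (measurable_urn3 θ δ a0 b0 c0 n).fst.comp_aemeasurable (aemeasurable_pi_lambda _ hU)

lemma indepFun_urn3X (hindep : iIndepFun U P) (hU : ∀ i, AEMeasurable (U i) P) (n : ℕ) :
    IndepFun (urn3X θ δ a0 b0 c0 U n) (U n) P := by
  let φ : (Finset.range n → ℝ) → ℝ := fun g =>
    (urn3 θ δ a0 b0 c0 (fun j => if h : j < n then g ⟨j, Finset.mem_range.2 h⟩ else 0) n).1
  have hφ : Measurable φ := by
    refine (measurable_urn3 θ δ a0 b0 c0 n).fst.comp (measurable_pi_lambda _ fun j => ?_)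
    by_cases h : j < n
    · simpa only [h, dif_pos] using measurable_pi_apply _
    · simpa only [h, dif_neg, not_false_eq_true] using measurable_const
  have h := (hindep.indepFun_finset₀ (Finset.range n) {n} (by simp) hU).comp hφ
    (measurable_pi_apply (⟨n, Finset.mem_singleton_self n⟩ : ({n} : Finset ℕ)))
  convert h using 1
  · funext ω
    exact congrArg Prod.fst (urn3_congr fun i hi => by simp [hi])
  · rfl

lemma integrable_comp_urn3X [IsFiniteMeasure P] (hU : ∀ i, AEMeasurable (U i) P) (hθ : 0 ≤ θ)
    {f : ℝ → ℝ} (hf : Continuous f) (n : ℕ) :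
    Integrable (fun ω => f (urn3X θ δ a0 b0 c0 U n ω)) P := by
  obtain ⟨C, hC⟩ := (isCompact_Icc (a := a0) (b := a0 + n * θ)).exists_bound_of_continuousOn
    hf.continuousOn
  exact .of_bound (hf.measurable.comp_aemeasurable (aemeasurable_urn3X hU n)).aestronglyMeasurable C
    (ae_of_all _ fun ω => hC _ ⟨urn3_fst_ge _ hθ n, urn3_fst_le _ hθ n⟩)

lemma integral_comp_urn3X_succ [IsFiniteMeasure P] (hindep : iIndepFun U P)
    (hU : ∀ i, AEMeasurable (U i) P) (hunif : ∀ i, P.map (U i) = volume.restrict (Ico 0 1))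
    (hθ : 0 ≤ θ) (ha0 : 0 ≤ a0) (hbc : 0 ≤ b0 + c0) {f : ℝ → ℝ} (hf : Continuous f) (n : ℕ) :
    ∫ ω, f (urn3X θ δ a0 b0 c0 U (n + 1) ω) ∂P =
      ∫ ω, (urn3X θ δ a0 b0 c0 U n ω / (a0 + b0 + c0 + n * θ) *
          f (urn3X θ δ a0 b0 c0 U n ω + θ) +
        (1 - urn3X θ δ a0 b0 c0 U n ω / (a0 + b0 + c0 + n * θ)) *
          f (urn3X θ δ a0 b0 c0 U n ω)) ∂P := by
  set T := a0 + b0 + c0 + n * θ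
  let G : ℝ × ℝ → ℝ := fun q => if q.2 < q.1 / T then f (q.1 + θ) else f q.1
  have hG : Measurable G :=
    Measurable.ite (measurableSet_lt measurable_snd (measurable_fst.div_const T))
      (hf.measurable.comp (measurable_fst.add_const θ)) (hf.measurable.comp measurable_fst)
  have hstep : (fun ω => f (urn3X θ δ a0 b0 c0 U (n + 1) ω)) =
      fun ω => G (urn3X θ δ a0 b0 c0 U n ω, U n ω) := by
    funext ω
    rw [urn3X, urn3_fst_succ, apply_ite f]
    rfl
  have hint := integrable_comp_urn3X (δ := δ) (a0 := a0) (b0 := b0) (c0 := c0) hU hθ hf (n + 1)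
  rw [hstep] at hint ⊢
  rw [(indepFun_urn3X hindep hU n).integral_comp_prodMk (aemeasurable_urn3X hU n) (hU n) hG hint,
    hunif n]
  refine integral_congr_ae (ae_of_all _ fun ω => ?_)
  obtain ⟨hp0, hp1⟩ := urn3_fst_div_total_mem_Icc (δ := δ) (fun j => U j ω) hθ ha0 hbc n
  exact integral_Ico_ite_lt hp0 hp1 (f (urn3X θ δ a0 b0 c0 U n ω + θ))
    (f (urn3X θ δ a0 b0 c0 U n ω))

lemma integral_urn3X_rising [IsProbabilityMeasure P] (hindep : iIndepFun U P)
    (hU : ∀ i, AEMeasurable (U i) P) (hunif : ∀ i, P.map (U i) = volume.restrict (Ico 0 1))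
    (hθ : 0 ≤ θ) (ha0 : 0 ≤ a0) (hbc : 0 ≤ b0 + c0) (l n : ℕ) :
    ∫ ω, ∏ i ∈ Finset.range l, (urn3X θ δ a0 b0 c0 U n ω + i * θ) ∂P =
      (∏ i ∈ Finset.range l, (a0 + i * θ)) *
        ∏ k ∈ Finset.range n, (1 + l * θ / (a0 + b0 + c0 + k * θ)) := by
  induction n with
  | zero => simp [urn3X, urn3]
  | succ n ih =>
    have hf : Continuous fun x : ℝ => ∏ i ∈ Finset.range l, (x + i * θ) := by fun_prop
    rw [integral_comp_urn3X_succ hindep hU hunif hθ ha0 hbc hf n, Finset.prod_range_succ,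
      ← mul_assoc, ← ih, ← integral_mul_const]
    refine integral_congr_ae (ae_of_all _ fun ω => ?_)
    linear_combination (a0 + b0 + c0 + n * θ)⁻¹ *
      mul_prod_range_add_succ_mul (urn3X θ δ a0 b0 c0 U n ω) θ l

lemma integral_urn3X_rising_eq_risingFact [IsProbabilityMeasure P] (hindep : iIndepFun U P)
    (hU : ∀ i, AEMeasurable (U i) P) (hunif : ∀ i, P.map (U i) = volume.restrict (Ico 0 1))
    (hθ : 0 < θ) (ha0 : 0 < a0) (hbc : 0 ≤ b0 + c0) (l n : ℕ) :
    ∫ ω, ∏ i ∈ Finset.range l, (urn3X θ δ a0 b0 c0 U n ω + i * θ) ∂P =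
      θ ^ l * (risingFact (a0 / θ) l / risingFact ((a0 + b0 + c0) / θ) l) *
        ∏ i ∈ Finset.range l, (n + ((a0 + b0 + c0) / θ + i)) := by
  set z := (a0 + b0 + c0) / θ
  have hz : 0 < z := div_pos (by linarith) hθ
  have hrise : ∏ i ∈ Finset.range l, (a0 + i * θ) = θ ^ l * ∏ i ∈ Finset.range l, (a0 / θ + i) := by
    rw [← Finset.card_range l, ← Finset.prod_const, Finset.card_range, ← Finset.prod_mul_distrib]
    exact Finset.prod_congr rfl fun i _ => by field_simp
  have hquot : ∀ k : ℕ, 1 + l * θ / (a0 + b0 + c0 + k * θ) = 1 + l / (z + k) := fun k => by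
    rw [show a0 + b0 + c0 + k * θ = θ * (z + k) by simp only [z]; field_simp]
    field_simp
  rw [integral_urn3X_rising hindep hU hunif hθ.le ha0.le hbc,
    Finset.prod_congr rfl fun k _ => hquot k, prod_range_one_add_div hz, hrise,
    risingFact_natCast_eq_prod (by positivity), risingFact_natCast_eq_prod hz]
  ring

open Finset in
lemma abs_prod_range_add_le {d : ℕ → ℝ} {M : ℝ} (x : ℝ) (m : ℕ) (hd : ∀ i < m, |d i| ≤ M) :
    |∏ i ∈ range m, (x + d i)| ≤ (|x| + M) ^ m := by
  rw [abs_prod, ← card_range m, ← prod_const, card_range]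
  exact prod_le_prod (fun _ _ => abs_nonneg _)
    fun i hi => (abs_add_le _ _).trans (by linarith [hd i (mem_range.1 hi)])

open Finset in
lemma abs_prod_range_add_sub_prod_range_add_le {c d : ℕ → ℝ} {M : ℝ} (x : ℝ) (l : ℕ)
    (hc : ∀ i ≤ l, |c i| ≤ M) (hd : ∀ i ≤ l, |d i| ≤ M) :
    |∏ i ∈ range (l + 1), (x + c i) - ∏ i ∈ range (l + 1), (x + d i)| ≤
      (l + 1) * (2 * M) * (|x| + M) ^ l := by
  induction l with
  | zero =>
    simp only [zero_add, prod_range_one, add_sub_add_left_eq_sub, Nat.cast_zero, pow_zero]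
    linarith [abs_sub _ _ |>.trans (add_le_add (hc 0 le_rfl) (hd 0 le_rfl))]
  | succ l ih =>
    have hcl := hc (l + 1) le_rfl
    have hdl := hd (l + 1) le_rfl
    have hM : 0 ≤ M := (abs_nonneg _).trans hcl
    have hA := ih (fun i hi => hc i (by omega)) (fun i hi => hd i (by omega))
    have hB := abs_prod_range_add_le x (l + 1) fun i hi => hd i (by omega)
    have hxc : |x + c (l + 1)| ≤ |x| + M := (abs_add_le _ _).trans (by linarith)
    have hcd : |c (l + 1) - d (l + 1)| ≤ 2 * M := (abs_sub _ _).trans (by linarith)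
    rw [prod_range_succ _ (l + 1), prod_range_succ _ (l + 1)]
    calc _ = |(∏ i ∈ range (l + 1), (x + c i) - ∏ i ∈ range (l + 1), (x + d i)) * (x + c (l + 1))
            + (∏ i ∈ range (l + 1), (x + d i)) * (c (l + 1) - d (l + 1))| := by
          congr 1; ring
      _ ≤ (l + 1) * (2 * M) * (|x| + M) ^ l * (|x| + M) + (|x| + M) ^ (l + 1) * (2 * M) := by
          refine (abs_add_le _ _).trans ?_
          rw [abs_mul, abs_mul]
          gcongr
      _ = _ := by push_cast; ring

lemma isBigO_natCast_pow_of_abs_le {g : ℕ → ℝ} {C A B : ℝ} {k : ℕ}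
    (h : ∀ n : ℕ, |g n| ≤ C * (A * n + B) ^ k) : g =O[atTop] fun n => (n : ℝ) ^ k := by
  have haff : (fun x : ℝ => A * x + B) =O[atTop] id :=
    (isBigO_const_mul_self A id atTop).add (isLittleO_const_id_atTop B).isBigO
  refine (isBigO_of_le' (c := 1) atTop fun n => ?_).trans
    ((haff.natCast_atTop.pow k).const_mul_left C)
  simpa using (h n).trans (le_abs_self _)

lemma isBigO_prod_range_natCast_add_sub_pow {z : ℝ} (hz : 0 ≤ z) (l : ℕ) :
    (fun n : ℕ => ∏ i ∈ Finset.range (l + 1), (n + (z + i)) - (n : ℝ) ^ (l + 1)) =O[atTop]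
      fun n => (n : ℝ) ^ l := by
  refine isBigO_natCast_pow_of_abs_le (C := (l + 1) * (2 * (z + l))) (A := 1) (B := z + l)
    fun n => ?_
  have hdiff := abs_prod_range_add_sub_prod_range_add_le (n : ℝ) l (c := fun i => z + i)
    (d := fun _ => 0) (M := z + l)
    (fun i hi => by
      have : (i : ℝ) ≤ l := by exact_mod_cast hi
      rw [abs_of_nonneg (by positivity)]; linarith)
    (fun _ _ => by rw [abs_zero]; positivity)
  simpa only [add_zero, Finset.prod_const, Finset.card_range, Nat.abs_cast, one_mul] using hdiff

lemma abs_integral_urn3X_falling_sub_rising_le [IsProbabilityMeasure P]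
    (hU : ∀ i, AEMeasurable (U i) P) (hθ : 0 ≤ θ) (ha0 : 0 ≤ a0) (l n : ℕ) :
    |∫ ω, ∏ i ∈ Finset.range (l + 1), (urn3X θ δ a0 b0 c0 U n ω - i) ∂P -
        ∫ ω, ∏ i ∈ Finset.range (l + 1), (urn3X θ δ a0 b0 c0 U n ω + i * θ) ∂P| ≤
      (l + 1) * (2 * (l * (1 + θ))) * (θ * n + (a0 + l * (1 + θ))) ^ l := by
  rw [← integral_sub
    (integrable_comp_urn3X hU hθ (f := fun x => ∏ i ∈ Finset.range (l + 1), (x - i))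
      (by fun_prop) n)
    (integrable_comp_urn3X hU hθ (f := fun x => ∏ i ∈ Finset.range (l + 1), (x + i * θ))
      (by fun_prop) n)]
  rw [← Real.norm_eq_abs]
  calc _ ≤ _ * P.real univ := norm_integral_le_of_norm_le_const (ae_of_all _ fun ω => ?_)
    _ = _ := by rw [probReal_univ, mul_one]
  have hX : |urn3X θ δ a0 b0 c0 U n ω| ≤ θ * n + a0 := by
    have hge : a0 ≤ urn3X θ δ a0 b0 c0 U n ω := urn3_fst_ge _ hθ n
    have hle : urn3X θ δ a0 b0 c0 U n ω ≤ a0 + n * θ := urn3_fst_le _ hθ n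
    rw [abs_of_nonneg (ha0.trans hge)]
    linarith
  have hdiff := abs_prod_range_add_sub_prod_range_add_le (urn3X θ δ a0 b0 c0 U n ω) l
    (c := fun i => -i) (d := fun i => i * θ) (M := l * (1 + θ))
    (fun i hi => by
      have : (i : ℝ) ≤ l := by exact_mod_cast hi
      rw [abs_neg, Nat.abs_cast]; nlinarith)
    (fun i hi => by
      have : (i : ℝ) ≤ l := by exact_mod_cast hi
      rw [abs_of_nonneg (by positivity)]; nlinarith)
  simp only [← sub_eq_add_neg] at hdiff
  refine hdiff.trans (mul_le_mul_of_nonneg_left (pow_le_pow_left₀ (by positivity) ?_ l)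
    (by positivity))
  linarith

end Moments

theorem urn3_x_factorial_moment_general
    {Ω : Type*} [MeasurableSpace Ω] (P : Measure Ω) [IsProbabilityMeasure P]
    (U : ℕ → Ω → ℝ)
    (hindep : iIndepFun U P)
    (hunif : ∀ i, Measure.map (U i) P = volume.restrict (Set.Ico (0:ℝ) 1))
    (θ δ a0 b0 c0 : ℝ) (hθ : 0 < θ)
    (ha0 : 0 < a0) (hb0 : 0 < b0) (hc0 : 0 < c0)
    (t0 : ℝ) (ht0 : t0 = a0 + b0 + c0) (l : ℕ) :
    (fun n : ℕ =>
        (∫ ω, ∏ i ∈ Finset.range l,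
            ((urn3 θ δ a0 b0 c0 (fun j => U j ω) n).1 - (i : ℝ)) ∂P)
          - θ ^ l * (risingFact (a0 / θ) l / risingFact (t0 / θ) l) * (n : ℝ) ^ l)
      =O[atTop] (fun n : ℕ => (n : ℝ) ^ ((l : ℝ) - 1)) := by
  subst ht0
  have hz : 0 < (a0 + b0 + c0) / θ := by positivity
  rcases l with _ | l
  · simpa [risingFact, (Real.Gamma_pos_of_pos (div_pos ha0 hθ)).ne', (Real.Gamma_pos_of_pos hz).ne']
      using isBigO_zero _ _
  have hU : ∀ i, AEMeasurable (U i) P := fun i =>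
    .of_map_ne_zero (by simp [hunif i, Measure.restrict_eq_zero])
  set K := θ ^ (l + 1) * (risingFact (a0 / θ) ↑(l + 1) / risingFact ((a0 + b0 + c0) / θ) ↑(l + 1))
  have hrising := integral_urn3X_rising_eq_risingFact (δ := δ) hindep hU hunif hθ ha0
    (add_pos hb0 hc0).le (l + 1)
  have hfalling := isBigO_natCast_pow_of_abs_le
    (abs_integral_urn3X_falling_sub_rising_le (δ := δ) (b0 := b0) (c0 := c0) hU hθ.le ha0.le l)
  have hpoly := (isBigO_prod_range_natCast_add_sub_pow hz.le l).const_mul_left K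
  simp only [urn3X] at hrising hfalling
  have hexp : ((l + 1 : ℕ) : ℝ) - 1 = l := by push_cast; ring
  simp only [hexp, Real.rpow_natCast]
  refine (hfalling.add hpoly).congr_left fun n => ?_
  rw [hrising n]
  ring

/-- the `l`-th factorial moment of the number `X_n` of `x`-balls satisfies
`E[(X_n)_l] = θ^l ((a₀/θ)^{(l)}/(t₀/θ)^{(l)}) n^l + O(n^{l-1})`. -/
theorem urn3_x_factorial_moment
    {Ω : Type*} [MeasurableSpace Ω] (P : Measure Ω) [IsProbabilityMeasure P]
    (U : ℕ → Ω → ℝ)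
    (hindep : iIndepFun U P)
    (hunif : ∀ i, Measure.map (U i) P = volume.restrict (Set.Ico (0:ℝ) 1))
    (θ δ a0 b0 c0 : ℝ) (hθ : 0 < θ) (hδ : 0 < δ) (hδθ : δ ≤ θ)
    (ha0 : 0 < a0) (hb0 : 0 < b0) (hc0 : 0 < c0)
    (t0 : ℝ) (ht0 : t0 = a0 + b0 + c0) (l : ℕ) :
    (fun n : ℕ =>
        (∫ ω, ∏ i ∈ Finset.range l,
            ((urn3 θ δ a0 b0 c0 (fun j => U j ω) n).1 - (i : ℝ)) ∂P)
          - θ ^ l * (risingFact (a0 / θ) l / risingFact (t0 / θ) l) * (n : ℝ) ^ l)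
      =O[atTop] (fun n : ℕ => (n : ℝ) ^ ((l : ℝ) - 1)) :=
  urn3_x_factorial_moment_general P U hindep hunif θ δ a0 b0 c0 hθ ha0 hb0 hc0 t0 ht0 l
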